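/- arXiv:1111.0762 — 2 statements merged into one kernel-verified Lean document; each statement's English description precedes it below -/
import Mathlib

section
/- For the symmetric two-choice probabilities p_i = (2i−1)/n² and every nonincreasing state s, for all sufficiently large n: ∑_{i=1}^n (p_i(α f* + 1/n + S α²) − α f*/n) · e^{α s_i}/(n² + i) ≤ (α f* + 2 S α²) · Φ(s)/n. -/
open Real Finset MeasureTheory

/-- Nonincreasing rearrangement of a tuple of reals. -/
noncomputable def sortDesc {n : ℕ} (r : Fin n → ℝ) : Fin n → ℝ :=
  fun i => r (Tuple.sort r i.rev)

/-- State update when a ball of total weight `x` lands in bin `j`. -/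
noncomputable def updW (n : ℕ) (x : ℝ) (s : Fin n → ℝ) (j : Fin n) : Fin n → ℝ :=
  fun i => if i = j then s i + x * (1 - 1 / n) else s i - x / n

/-- Weighted-case potential Φ(s) = ∑_{i=1}^n e^{α s_i} / (n² + i). -/
noncomputable def PhiW (n : ℕ) (α : ℝ) (s : Fin n → ℝ) : ℝ :=
  ∑ i : Fin n, Real.exp (α * s i) / ((n : ℝ) ^ 2 + i.1 + 1)

/-- Weighted-case potential Ψ(s) = ∑_{i=1}^n e^{-α s_i} / (n² + n − i + 1). -/
noncomputable def PsiW (n : ℕ) (α : ℝ) (s : Fin n → ℝ) : ℝ :=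
  ∑ i : Fin n, Real.exp (-α * s i) / ((n : ℝ) ^ 2 + (n : ℝ) - i.1)

/-- Weighted-case potential Γ(s) = Φ(s) + Ψ(s). -/
noncomputable def GammaW (n : ℕ) (α : ℝ) (s : Fin n → ℝ) : ℝ :=
  PhiW n α s + PsiW n α s

/-!
With `A = αf* + 1/n + Sα²` and `B = αf* + 2Sα²`, the left-hand side is
`∑ (p_i A - (αf* + B)/n) e^{αs_i}/(n² + i) + B Φ/n`. The coefficients `p_i A - (αf* + B)/n`
increase with `i` and sum to `1/n - αf* - Sα² ≤ 0` once `n ≥ 1/(αf*)`, while the terms of `Φ`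
decrease with `i` because `s` does; Chebyshev's sum inequality makes the first sum nonpositive.
-/

lemma sum_fin_two_mul_add_one (n : ℕ) : ∑ i : Fin n, (2 * i.1 + 1 : ℝ) = (n : ℝ) ^ 2 := by
  induction n with
  | zero => simp
  | succ m ih =>
    rw [Fin.sum_univ_castSucc]
    simp only [Fin.val_castSucc, Fin.val_last]
    rw [ih]
    push_cast
    ring

lemma sum_mul_nonpos_of_monotone_of_antitone {ι : Type*} [LinearOrder ι] [Fintype ι]
    [Nonempty ι] {d c : ι → ℝ} (hd : Monotone d) (hc : Antitone c)
    (hd0 : ∑ i, d i ≤ 0) (hc0 : 0 ≤ ∑ i, c i) : ∑ i, d i * c i ≤ 0 := by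
  have hcheb := (hd.antivary hc).card_mul_sum_le_sum_mul_sum
  have hcard : (0 : ℝ) < Fintype.card ι := by exact_mod_cast Fintype.card_pos
  nlinarith [mul_nonpos_of_nonpos_of_nonneg hd0 hc0]

lemma sum_twoChoice_coeff_mul_nonpos {n : ℕ} {A C : ℝ} (hA : 0 ≤ A) (hAC : A ≤ C)
    {c : Fin n → ℝ} (hc : Antitone c) (hc0 : 0 ≤ ∑ i, c i) :
    ∑ i : Fin n, ((2 * i.1 + 1 : ℝ) / (n : ℝ) ^ 2 * A - C / n) * c i ≤ 0 := by
  rcases Nat.eq_zero_or_pos n with rfl | hn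
  · simp
  have : Nonempty (Fin n) := ⟨⟨0, hn⟩⟩
  refine sum_mul_nonpos_of_monotone_of_antitone (fun i j hij => ?_) hc ?_ hc0
  · have hij' : (i.1 : ℝ) ≤ j.1 := by exact_mod_cast hij
    gcongr
  · have hn0 : (n : ℝ) ≠ 0 := by positivity
    rw [sum_sub_distrib, ← sum_mul, ← sum_div, sum_fin_two_mul_add_one, sum_const, card_univ,
      Fintype.card_fin, nsmul_eq_mul, div_self (pow_ne_zero 2 hn0), mul_div_cancel₀ _ hn0]
    linarith

lemma antitone_exp_mul_div_sq_add {n : ℕ} {α : ℝ} (hα : 0 ≤ α) {s : Fin n → ℝ}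
    (hs : Antitone s) :
    Antitone fun i : Fin n => Real.exp (α * s i) / ((n : ℝ) ^ 2 + i.1 + 1) := by
  intro i j hij
  have hij' : (i.1 : ℝ) ≤ j.1 := by exact_mod_cast hij
  have := hs hij
  dsimp only
  gcongr

theorem stmt11_general (fstar lam S ε : ℝ) (hfstar1 : 1 ≤ fstar)
    (hlam : 0 < lam) (hS : 1 ≤ S) (hε0 : 0 < ε)
    (α : ℝ) (hα : α = min (ε / (6 * S)) (min (lam / 2) (ε / (2 * fstar)))) :
    ∃ N : ℕ, ∀ n : ℕ, N ≤ n →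
      ∀ s : Fin n → ℝ,
        (∀ i j : Fin n, i ≤ j → s j ≤ s i) → (∑ i, s i = 0) →
        ∑ i : Fin n,
            ((2 * i.1 + 1 : ℝ) / (n : ℝ) ^ 2 *
                (α * fstar + 1 / n + S * α ^ 2) - α * fstar / n) *
              Real.exp (α * s i) / ((n : ℝ) ^ 2 + i.1 + 1) ≤
          (α * fstar + 2 * S * α ^ 2) * PhiW n α s / n := by
  have hα0 : 0 < α := by
    rw [hα]
    exact lt_min (by positivity) (lt_min (by positivity) (by positivity))
  have hαf : 0 < α * fstar := by positivity
  refine ⟨⌈(α * fstar)⁻¹⌉₊, fun n hN s hs _ => ?_⟩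
  have hn : (0 : ℝ) < n := by exact_mod_cast (Nat.ceil_pos.2 (inv_pos.2 hαf)).trans_le hN
  have hinv : 1 / (n : ℝ) ≤ α * fstar := by
    rw [one_div, inv_le_comm₀ hn hαf]
    exact (Nat.le_ceil _).trans (by exact_mod_cast hN)
  set B := α * fstar + 2 * S * α ^ 2
  set c : Fin n → ℝ := fun i => Real.exp (α * s i) / ((n : ℝ) ^ 2 + i.1 + 1)
  have hchebyshev := sum_twoChoice_coeff_mul_nonpos (A := α * fstar + 1 / n + S * α ^ 2)
    (C := α * fstar + B) (by positivity) (by nlinarith) (c := c)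
    (antitone_exp_mul_div_sq_add hα0.le fun i j hij => hs i j hij)
    (sum_nonneg fun i _ => by positivity)
  calc _ = ∑ i : Fin n, ((2 * i.1 + 1 : ℝ) / (n : ℝ) ^ 2 * (α * fstar + 1 / n + S * α ^ 2)
          - (α * fstar + B) / n) * c i + B * PhiW n α s / n := by
        rw [PhiW, mul_sum, sum_div, ← sum_add_distrib]
        refine sum_congr rfl fun i _ => ?_
        ring
    _ ≤ B * PhiW n α s / n := by linarith

/-- Corollary `cor-phi-gen-w`: for the two-choice probabilities
`p_i = (2i−1)/n²` and any nonincreasing state `s`,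
`∑ i (p_i(αf* + 1/n + Sα²) − αf*/n) e^{αs_i}/(n²+i) ≤ (αf* + 2Sα²)Φ(s)/n`. -/
theorem stmt11 (fstar lam S ε : ℝ) (hfstar1 : 1 ≤ fstar)
    (hlam : 0 < lam) (hS : 1 ≤ S) (hε0 : 0 < ε) (hε1 : ε ≤ 1 / 4)
    (α : ℝ) (hα : α = min (ε / (6 * S)) (min (lam / 2) (ε / (2 * fstar)))) :
    ∃ N : ℕ, ∀ n : ℕ, N ≤ n →
      ∀ s : Fin n → ℝ,
        (∀ i j : Fin n, i ≤ j → s j ≤ s i) → (∑ i, s i = 0) →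
        ∑ i : Fin n,
            ((2 * i.1 + 1 : ℝ) / (n : ℝ) ^ 2 *
                (α * fstar + 1 / n + S * α ^ 2) - α * fstar / n) *
              Real.exp (α * s i) / ((n : ℝ) ^ 2 + i.1 + 1) ≤
          (α * fstar + 2 * S * α ^ 2) * PhiW n α s / n :=
  stmt11_general fstar lam S ε hfstar1 hlam hS hε0 α hα
end

section
/- In the (1+β)-choice-type multidimensional process, if the sorted state s satisfies s_{⌈γ₂ n⌉} ≤ 0, then for all sufficiently large n the one-step expectation of Φ satisfies ∑_{j=1}^n p_j Φ(sort(r^(j))) ≤ (1 − ε²/(4n)) · Φ(s) + 1. -/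
open Real Finset

/-- State update when a ball of total load `f` lands in bin `j`. -/
noncomputable def upd (n f : ℕ) (s : Fin n → ℝ) (j : Fin n) : Fin n → ℝ :=
  fun i => if i = j then s i + (f : ℝ) * (1 - 1 / n) else s i - (f : ℝ) / n

/-- Potential Φ(s) = ∑_{i=1}^n e^{α s_i}. -/
noncomputable def PhiB (n : ℕ) (α : ℝ) (s : Fin n → ℝ) : ℝ :=
  ∑ i : Fin n, Real.exp (α * s i)

/-- Potential Ψ(s) = ∑_{i=1}^n e^{-α s_i}. -/
noncomputable def PsiB (n : ℕ) (α : ℝ) (s : Fin n → ℝ) : ℝ :=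
  ∑ i : Fin n, Real.exp (-α * s i)

/-- Potential Γ(s) = Φ(s) + Ψ(s). -/
noncomputable def GammaB (n : ℕ) (α : ℝ) (s : Fin n → ℝ) : ℝ :=
  PhiB n α s + PsiB n α s

/-!
Landing in bin `j` lowers every coordinate by `f/n` and raises `s_j` by `f`, so with `a = αf`
we get `Φ(r^(j)) = e^{-a/n} (Φ(s) + (e^a - 1) e^{α s_j})`, and sorting does not change `Φ`.
By Chebyshev's sum inequality (`p` increasing, `e^{α s}` decreasing) the first `⌈γ₂ n⌉ - 1`
bins contribute at most `(γ₂ - ε)/(γ₂ n - 1) · Φ(s)` to `∑ p_j e^{α s_j}`; the others have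
`s_j ≤ 0` and contribute at most `1`. With `a = ε/2` the coefficient of `Φ(s)` is then about
`1 - (a/n)(1 - (1 + a)(γ₂ - 2a)/γ₂)`, which is below `1 - a²/n` for large `n` since `γ₂ < 1`.
-/

open Filter Topology

theorem exp_sub_one_le_add_sq {a : ℝ} (ha0 : 0 ≤ a) (ha1 : a ≤ 1) : exp a - 1 ≤ a + a ^ 2 := by
  have := (abs_le.1 (abs_exp_sub_one_sub_id_le (x := a) (abs_le.2 ⟨by linarith, ha1⟩))).2
  linarith

theorem exp_neg_mul_mul_one_add_le {a t c : ℝ} (ha0 : 0 ≤ a) (ha1 : a ≤ 1) (ht : 0 ≤ t)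
    (hc : 0 ≤ c) (h : (1 + a) * c + a ^ 2 * t ^ 2 ≤ (1 - a) * t) :
    exp (-(a * t)) * (1 + (exp a - 1) * c) ≤ 1 - a ^ 2 * t := by
  have hat : 0 < 1 + a * t := by positivity
  calc exp (-(a * t)) * (1 + (exp a - 1) * c)
      ≤ (1 + a * t)⁻¹ * (1 + (a + a ^ 2) * c) := by
        rw [exp_neg]
        gcongr
        · nlinarith [add_one_le_exp a]
        · linarith [add_one_le_exp (a * t)]
        · exact exp_sub_one_le_add_sq ha0 ha1
    _ ≤ 1 - a ^ 2 * t := by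
        rw [inv_mul_le_iff₀ hat]
        nlinarith [mul_le_mul_of_nonneg_left h ha0]

theorem eventually_contraction_condition {a γ : ℝ} (ha : 0 < a) (hγ0 : 0 < γ) (hγ1 : γ < 1) :
    ∀ᶠ n : ℕ in atTop, 1 < γ * n ∧
      (1 + a) * ((γ - 2 * a) / (γ * n - 1)) + a ^ 2 * (1 / n) ^ 2 ≤ (1 - a) * (1 / n) := by
  have ht := tendsto_one_div_atTop_nhds_zero_nat (𝕜 := ℝ)
  have hlim : Tendsto (fun n : ℕ => (1 + a) * (γ - 2 * a) / (γ - 1 / n) + a ^ 2 * (1 / n))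
      atTop (𝓝 ((1 + a) * (γ - 2 * a) / (γ - 0) + a ^ 2 * 0)) :=
    (tendsto_const_nhds.div (tendsto_const_nhds.sub ht) (by rw [sub_zero]; exact hγ0.ne')).add
      (tendsto_const_nhds.mul ht)
  -- `(1 + a)(γ - 2a) < (1 - a)γ` reduces to `aγ < a + a²`: this is where `γ < 1` enters.
  have hlt : (1 + a) * (γ - 2 * a) / (γ - 0) + a ^ 2 * 0 < 1 - a := by
    rw [sub_zero, mul_zero, add_zero, div_lt_iff₀ hγ0]
    nlinarith
  filter_upwards [hlim.eventually_lt_const hlt, ht.eventually_lt_const hγ0, eventually_gt_atTop 0]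
    with n hn htn hn0
  have hn0' : (0 : ℝ) < n := by exact_mod_cast hn0
  have hγn : 1 < γ * n := by rw [div_lt_iff₀ hn0'] at htn; linarith
  refine ⟨hγn, ?_⟩
  have key : (1 + a) * ((γ - 2 * a) / (γ * n - 1)) + a ^ 2 * (1 / n) ^ 2 =
      ((1 + a) * (γ - 2 * a) / (γ - 1 / n) + a ^ 2 * (1 / n)) * (1 / n) := by
    field_simp
  rw [key]
  exact mul_le_mul_of_nonneg_right hn.le (by positivity)

theorem exists_fin_succ_eq_ceil {n : ℕ} {x : ℝ} (h0 : 0 < x) (h1 : x ≤ n) :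
    ∃ k : Fin n, k.1 + 1 = ⌈x⌉₊ ∧ x - 1 ≤ k := by
  have hpos : 0 < ⌈x⌉₊ := Nat.ceil_pos.2 h0
  refine ⟨⟨⌈x⌉₊ - 1, by have := Nat.ceil_le.2 h1; omega⟩, by simp only; omega, ?_⟩
  rw [Nat.cast_sub hpos, Nat.cast_one]
  linarith [Nat.le_ceil x]

theorem PhiB_sortDesc {n : ℕ} (α : ℝ) (r : Fin n → ℝ) : PhiB n α (sortDesc r) = PhiB n α r :=
  Fintype.sum_equiv (Fin.revPerm.trans (Tuple.sort r)) _ _ fun _ => rfl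

theorem PhiB_upd (n f : ℕ) (α : ℝ) (s : Fin n → ℝ) (j : Fin n) :
    PhiB n α (upd n f s j) =
      exp (-(α * f / n)) * (PhiB n α s + (exp (α * f) - 1) * exp (α * s j)) := by
  have hterm (i : Fin n) : exp (α * upd n f s j i) = exp (-(α * f / n)) *
      (exp (α * s i) + if i = j then (exp (α * f) - 1) * exp (α * s j) else 0) := by
    unfold upd
    split_ifs with h
    · subst h
      rw [show exp (α * s i) + (exp (α * f) - 1) * exp (α * s i) = exp (α * f) * exp (α * s i)
        by ring, ← exp_add, ← exp_add]
      ring_nf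
    · rw [add_zero, ← exp_add]
      ring_nf
  simp only [PhiB, hterm, ← mul_sum, sum_add_distrib, sum_ite_eq', mem_univ, if_true]

theorem sum_mul_PhiB_sortDesc_upd {n : ℕ} (f : ℕ) (α : ℝ) {p : Fin n → ℝ} (hp : ∑ j, p j = 1)
    (s : Fin n → ℝ) :
    ∑ j, p j * PhiB n α (sortDesc (upd n f s j)) =
      exp (-(α * f / n)) * (PhiB n α s + (exp (α * f) - 1) * ∑ j, p j * exp (α * s j)) := by
  simp only [PhiB_sortDesc, PhiB_upd, mul_add, mul_sum, sum_add_distrib, ← sum_mul, hp, one_mul]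
  exact congrArg _ (sum_congr rfl fun j _ => by ring)

theorem sum_mul_exp_le {n : ℕ} {α : ℝ} (hα : 0 ≤ α) {p s : Fin n → ℝ} (hp0 : ∀ i, 0 ≤ p i)
    (hp : Monotone p) (hp1 : ∑ j, p j = 1) (hs : Antitone s) {k : Fin n} (hk : s k ≤ 0) :
    ∑ j, p j * exp (α * s j) ≤ (∑ j ∈ Iio k, p j) / k * PhiB n α s + 1 := by
  have hexp : Antitone fun j => exp (α * s j) :=
    fun i j hij => exp_le_exp.2 (mul_le_mul_of_nonneg_left (hs hij) hα)
  have head : ∑ j ∈ Iio k, p j * exp (α * s j) ≤ (∑ j ∈ Iio k, p j) / k * PhiB n α s := by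
    rcases Nat.eq_zero_or_pos k with hk0 | hk0
    -- for `k = 0` the head is empty and `x / 0 = 0` keeps the bound true
    · have hempty : Iio k = ∅ := by rw [← card_eq_zero, Fin.card_Iio, hk0]
      simp [hempty]
    have cheb := ((hp.antivary hexp).antivaryOn (Iio k : Set (Fin n))).card_mul_sum_le_sum_mul_sum
    rw [Fin.card_Iio] at cheb
    rw [div_mul_eq_mul_div, le_div_iff₀ (by exact_mod_cast hk0), mul_comm]
    refine cheb.trans (mul_le_mul_of_nonneg_left ?_ (sum_nonneg fun j _ => hp0 j))
    exact sum_le_sum_of_subset_of_nonneg (subset_univ _) fun j _ _ => (exp_pos _).le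
  have tail : ∑ j ∈ Ici k, p j * exp (α * s j) ≤ 1 := calc
    ∑ j ∈ Ici k, p j * exp (α * s j) ≤ ∑ j ∈ Ici k, p j := by
      refine sum_le_sum fun j hj => mul_le_of_le_one_right (hp0 j) (exp_le_one_iff.2 ?_)
      exact mul_nonpos_of_nonneg_of_nonpos hα ((hs (mem_Ici.1 hj)).trans hk)
    _ ≤ ∑ j, p j := sum_le_sum_of_subset_of_nonneg (subset_univ _) fun j _ _ => hp0 j
    _ = 1 := hp1
  rw [← sum_filter_add_sum_filter_not univ (· < k)]
  simp only [filter_gt_eq_Iio, not_lt, filter_le_eq_Ici]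
  exact add_le_add head tail

theorem sum_mul_PhiB_sortDesc_upd_le {n f : ℕ} {α c : ℝ} (hα : 0 ≤ α) (ha : α * f ≤ 1 / 2)
    {p s : Fin n → ℝ} (hp0 : ∀ i, 0 ≤ p i) (hp : Monotone p) (hp1 : ∑ j, p j = 1)
    (hs : Antitone s) {k : Fin n} (hk : s k ≤ 0) (hc : (∑ j ∈ Iio k, p j) / k ≤ c)
    (hcond : (1 + α * f) * c + (α * f) ^ 2 * (1 / n) ^ 2 ≤ (1 - α * f) * (1 / n)) :
    ∑ j, p j * PhiB n α (sortDesc (upd n f s j)) ≤ (1 - (α * f) ^ 2 / n) * PhiB n α s + 1 := by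
  set a := α * f
  have ha0 : 0 ≤ a := mul_nonneg hα f.cast_nonneg
  have hc0 : 0 ≤ c := (div_nonneg (sum_nonneg fun j _ => hp0 j) k.1.cast_nonneg).trans hc
  have hΦ : 0 ≤ PhiB n α s := sum_nonneg fun _ _ => (exp_pos _).le
  have hD0 : 0 ≤ exp a - 1 := by linarith [add_one_le_exp a]
  have hD1 : exp (-(a / n)) * (exp a - 1) ≤ 1 := by
    have : exp (-(a / n)) ≤ 1 := exp_le_one_iff.2 (neg_nonpos.2 (by positivity))
    nlinarith [exp_sub_one_le_add_sq ha0 (by linarith)]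
  have hS := sum_mul_exp_le hα hp0 hp hp1 hs hk
  calc ∑ j, p j * PhiB n α (sortDesc (upd n f s j))
      = exp (-(a / n)) * (PhiB n α s + (exp a - 1) * ∑ j, p j * exp (α * s j)) :=
        sum_mul_PhiB_sortDesc_upd f α hp1 s
    _ ≤ exp (-(a / n)) * (PhiB n α s + (exp a - 1) * (c * PhiB n α s + 1)) := by
        gcongr
        exact hS.trans (by gcongr)
    _ = exp (-(a * (1 / n))) * (1 + (exp a - 1) * c) * PhiB n α s
          + exp (-(a / n)) * (exp a - 1) := by
        rw [mul_one_div]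
        ring
    _ ≤ (1 - a ^ 2 * (1 / n)) * PhiB n α s + 1 := by
        gcongr
        exact exp_neg_mul_mul_one_add_le ha0 (by linarith) (by positivity) hc0 hcond
    _ = (1 - a ^ 2 / n) * PhiB n α s + 1 := by rw [mul_one_div]

theorem stmt17_general (f : ℕ) (hf : 0 < f) (ε θ γ₁ γ₂ γ₃ γ₄ : ℝ)
    (hε0 : 0 < ε) (hε1 : ε ≤ 1 / 4)
    (h4 : (1 : ℝ) / 2 < γ₄)
    (h42 : γ₄ < γ₂) (h2 : γ₂ < 1) (α : ℝ) (hα : α = ε / (2 * f)) :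
    ∃ N : ℕ, ∀ n : ℕ, N ≤ n →
      ∀ p s : Fin n → ℝ,
        (∀ i, 0 ≤ p i) → Monotone p → (∑ i, p i = 1) →
        (∀ k : Fin n, k.1 + 1 = ⌈γ₃ * (n : ℝ)⌉₊ → p k ≤ (1 - θ * ε) / n) →
        (∀ k : Fin n, k.1 + 1 = ⌈γ₄ * (n : ℝ)⌉₊ → (1 + θ * ε) / n ≤ p k) →
        (∑ i ∈ Finset.univ.filter (fun i : Fin n => i.1 + 1 < ⌈γ₂ * (n : ℝ)⌉₊),
            p i ≤ γ₂ - ε) →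
        (γ₂ + ε ≤
          ∑ i ∈ Finset.univ.filter (fun i : Fin n => ⌈γ₁ * (n : ℝ)⌉₊ ≤ i.1 + 1),
            p i) →
        (∀ i j : Fin n, i ≤ j → s j ≤ s i) → (∑ i, s i = 0) →
        (∀ k : Fin n, k.1 + 1 = ⌈γ₂ * (n : ℝ)⌉₊ → s k ≤ 0) →
        ∑ j : Fin n, p j * PhiB n α (sortDesc (upd n f s j)) ≤
          (1 - ε ^ 2 / (4 * n)) * PhiB n α s + 1 := by
  have hγ₂ : 0 < γ₂ := by linarith
  have hα0 : 0 ≤ α := by rw [hα]; positivity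
  have ha : α * f = ε / 2 := by rw [hα]; field_simp
  obtain ⟨N, hN⟩ :=
    eventually_atTop.1 (eventually_contraction_condition (a := ε / 2) (by positivity) hγ₂ h2)
  refine ⟨N, fun n hn p s hp0 hp hp1 _ _ hhead _ hs _ hsK => ?_⟩
  obtain ⟨hγn, hcond⟩ := hN n hn
  obtain ⟨k, hkK, hk⟩ := exists_fin_succ_eq_ceil (n := n) (x := γ₂ * n) (by linarith)
    (by nlinarith [(n.cast_nonneg : (0 : ℝ) ≤ n)])
  have hIio : ∑ j ∈ Iio k, p j ≤ γ₂ - ε := by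
    convert hhead using 2
    ext j
    simp only [mem_Iio, mem_filter, mem_univ, true_and, Fin.lt_def]
    omega
  have hc : (∑ j ∈ Iio k, p j) / k ≤ (γ₂ - 2 * (ε / 2)) / (γ₂ * n - 1) :=
    div_le_div₀ (by linarith) (by linarith) (by linarith) hk
  rw [show ε ^ 2 / (4 * n) = (α * f) ^ 2 / n by rw [ha]; ring]
  exact sum_mul_PhiB_sortDesc_upd_le hα0 (by linarith) hp0 hp hp1 hs (hsK k hkK) hc (by rwa [ha])

/-- Lemma `lemma-phi-easy-case-beta`: in the (1+β)-choice-type process, if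
`s_{⌈γ₂ n⌉} ≤ 0` then `∑_j p_j Φ(sort(r^(j))) ≤ (1 − ε²/(4n)) Φ(s) + 1` for all
sufficiently large `n`. -/
theorem stmt17 (f : ℕ) (hf : 0 < f) (ε θ γ₁ γ₂ γ₃ γ₄ : ℝ)
    (hε0 : 0 < ε) (hε1 : ε ≤ 1 / 4) (hθ : 1 < θ)
    (hγ₁ : 0 < γ₁) (h13 : γ₁ < γ₃) (h3 : γ₃ < 1 / 2) (h4 : (1 : ℝ) / 2 < γ₄)
    (h42 : γ₄ < γ₂) (h2 : γ₂ < 1) (hθγ : θ * γ₁ = 1) (h12 : γ₁ + γ₂ = 1)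
    (h34 : γ₃ + γ₄ = 1) (α : ℝ) (hα : α = ε / (2 * f)) :
    ∃ N : ℕ, ∀ n : ℕ, N ≤ n →
      ∀ p s : Fin n → ℝ,
        (∀ i, 0 ≤ p i) → Monotone p → (∑ i, p i = 1) →
        (∀ k : Fin n, k.1 + 1 = ⌈γ₃ * (n : ℝ)⌉₊ → p k ≤ (1 - θ * ε) / n) →
        (∀ k : Fin n, k.1 + 1 = ⌈γ₄ * (n : ℝ)⌉₊ → (1 + θ * ε) / n ≤ p k) →
        (∑ i ∈ Finset.univ.filter (fun i : Fin n => i.1 + 1 < ⌈γ₂ * (n : ℝ)⌉₊),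
            p i ≤ γ₂ - ε) →
        (γ₂ + ε ≤
          ∑ i ∈ Finset.univ.filter (fun i : Fin n => ⌈γ₁ * (n : ℝ)⌉₊ ≤ i.1 + 1),
            p i) →
        (∀ i j : Fin n, i ≤ j → s j ≤ s i) → (∑ i, s i = 0) →
        (∀ k : Fin n, k.1 + 1 = ⌈γ₂ * (n : ℝ)⌉₊ → s k ≤ 0) →
        ∑ j : Fin n, p j * PhiB n α (sortDesc (upd n f s j)) ≤
          (1 - ε ^ 2 / (4 * n)) * PhiB n α s + 1 :=
  stmt17_general f hf ε θ γ₁ γ₂ γ₃ γ₄ hε0 hε1 h4 h42 h2 α hα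
end
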